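/- Let W be a real random variable with E[W] = 0 and Var(W) = σ² ∈ (0, ∞). Then the function p*(x) = E[W · 1(W > x)]/σ² is nonnegative and integrates to 1 over ℝ, and the probability measure μ* on ℝ with density p* satisfies the zero-bias identity: for every differentiable function f : ℝ → ℝ with derivative f′ such that E|W f(W)| < ∞ and f′ is integrable with respect to μ*, one has E[W f(W)] = σ² ∫_ℝ f′ dμ*. -/

import Mathlib

/-!
Write `W 1(W > x) = K(x, W) + 1(x < 0) W` with the kernel `K(x, w) = |w| 1(min 0 w ≤ x < max 0 w)`.
As `E[W] = 0`, this gives `E[W 1(W > x)] = E[K(x, W)] ≥ 0`. Since `∫ g(x) K(x, w) dx = w ∫₀^w g`,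
Tonelli gives `∫ E[K(x, W)] dx = E[W²] = σ²`, and Fubini with the fundamental theorem of calculus
gives `∫ f'(x) E[K(x, W)] dx = E[W (f(W) - f(0))] = E[W f(W)]`.
-/

open MeasureTheory Set

noncomputable def zeroBiasKernel (x w : ℝ) : ℝ := |w| * (Ico (min 0 w) (max 0 w)).indicator 1 x

lemma zeroBiasKernel_nonneg (x w : ℝ) : 0 ≤ zeroBiasKernel x w :=
  mul_nonneg (abs_nonneg w) (indicator_nonneg (fun _ _ => zero_le_one) x)

lemma zeroBiasKernel_le_abs (x w : ℝ) : zeroBiasKernel x w ≤ |w| :=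
  mul_le_of_le_one_right (abs_nonneg w)
    (indicator_apply_le' (fun _ => le_rfl) (fun _ => zero_le_one))

lemma measurable_zeroBiasKernel : Measurable (Function.uncurry zeroBiasKernel) := by
  have hs : MeasurableSet {p : ℝ × ℝ | p.1 ∈ Ico (min 0 p.2) (max 0 p.2)} :=
    (measurableSet_le (by fun_prop) measurable_fst).inter
      (measurableSet_lt measurable_fst (by fun_prop))
  exact measurable_snd.abs.mul (measurable_const.indicator hs)

lemma mul_zeroBiasKernel (g : ℝ → ℝ) (x w : ℝ) :
    g x * zeroBiasKernel x w = |w| * (Ico (min 0 w) (max 0 w)).indicator g x := by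
  simp only [zeroBiasKernel, indicator_apply, Pi.one_apply]
  split_ifs <;> ring

lemma ite_lt_eq_zeroBiasKernel_add (x w : ℝ) :
    (if x < w then w else 0) = zeroBiasKernel x w + (Iio 0).indicator 1 x * w := by
  simp only [zeroBiasKernel, indicator_apply, mem_Ico, mem_Iio, Pi.one_apply]
  rcases le_total 0 w with hw | hw
  · simp only [min_eq_left hw, max_eq_right hw, abs_of_nonneg hw]
    split_ifs <;> grind
  · simp only [min_eq_right hw, max_eq_left hw, abs_of_nonpos hw]
    split_ifs <;> grind

lemma lintegral_zeroBiasKernel (w : ℝ) :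
    ∫⁻ x, ENNReal.ofReal (zeroBiasKernel x w) = ENNReal.ofReal (w ^ 2) := by
  have h : ∀ x, ENNReal.ofReal (zeroBiasKernel x w)
      = (Ico (min 0 w) (max 0 w)).indicator (fun _ => ENNReal.ofReal |w|) x := fun x => by
    simp only [zeroBiasKernel, indicator_apply, Pi.one_apply]
    split_ifs <;> simp
  rw [lintegral_congr h, lintegral_indicator_const measurableSet_Ico, Real.volume_Ico,
    max_sub_min_eq_abs, sub_zero, ← ENNReal.ofReal_mul (abs_nonneg w), abs_mul_abs_self, sq]

lemma integral_mul_zeroBiasKernel (g : ℝ → ℝ) (w : ℝ) :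
    ∫ x, g x * zeroBiasKernel x w = w * ∫ x in 0..w, g x := by
  simp_rw [mul_zeroBiasKernel, integral_const_mul, integral_indicator measurableSet_Ico,
    integral_Ico_eq_integral_Ioc, intervalIntegral.intervalIntegral_eq_integral_uIoc, uIoc,
    smul_eq_mul]
  rcases lt_trichotomy w 0 with hw | rfl | hw
  · simp [abs_of_neg hw, hw.not_ge]
  · simp
  · simp [abs_of_pos hw, hw.le]

lemma intervalIntegrable_of_integrable_mul_zeroBiasKernel {g : ℝ → ℝ} {w : ℝ}
    (h : Integrable fun x => g x * zeroBiasKernel x w) : IntervalIntegrable g volume 0 w := by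
  rcases eq_or_ne w 0 with rfl | hw
  · exact IntervalIntegrable.refl
  simp_rw [mul_zeroBiasKernel] at h
  rw [integrable_const_mul_iff (isUnit_iff_ne_zero.mpr (abs_ne_zero.mpr hw)),
    integrable_indicator_iff measurableSet_Ico] at h
  exact intervalIntegrable_iff.mpr (h.congr_set_ae Ico_ae_eq_Ioc.symm)

section

variable {Ω : Type*} [MeasurableSpace Ω] {μ : Measure Ω} {W : Ω → ℝ}

lemma integrable_zeroBiasKernel_comp (hW : Integrable W μ) (x : ℝ) :
    Integrable (fun ω => zeroBiasKernel x (W ω)) μ :=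
  hW.mono (measurable_zeroBiasKernel.of_uncurry_left.comp_aemeasurable
    hW.aemeasurable).aestronglyMeasurable (ae_of_all _ fun ω => by
      simpa [abs_of_nonneg (zeroBiasKernel_nonneg x (W ω))] using zeroBiasKernel_le_abs x (W ω))

lemma integral_indicator_lt_eq_integral_zeroBiasKernel (hW : Integrable W μ)
    (hmean : ∫ ω, W ω ∂μ = 0) (x : ℝ) :
    ∫ ω, {ω' | x < W ω'}.indicator W ω ∂μ = ∫ ω, zeroBiasKernel x (W ω) ∂μ := by
  simp_rw [indicator_apply, mem_ofPred_eq, ite_lt_eq_zeroBiasKernel_add]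
  rw [integral_add (integrable_zeroBiasKernel_comp hW x) (hW.const_mul _), integral_const_mul,
    hmean, mul_zero, add_zero]

lemma ofReal_integral_zeroBiasKernel (hW : Integrable W μ) (x : ℝ) :
    ENNReal.ofReal (∫ ω, zeroBiasKernel x (W ω) ∂μ)
      = ∫⁻ ω, ENNReal.ofReal (zeroBiasKernel x (W ω)) ∂μ :=
  ofReal_integral_eq_lintegral_ofReal (integrable_zeroBiasKernel_comp hW x)
    (ae_of_all _ fun ω => zeroBiasKernel_nonneg x (W ω))

lemma aemeasurable_zeroBiasKernel_prod (hW : AEMeasurable W μ) :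
    AEMeasurable (fun q : ℝ × Ω => zeroBiasKernel q.1 (W q.2)) (volume.prod μ) :=
  measurable_zeroBiasKernel.comp_aemeasurable (measurable_fst.aemeasurable.prodMk hW.comp_snd)

variable [SFinite μ]

lemma lintegral_ofReal_integral_zeroBiasKernel (hW : Integrable W μ) :
    ∫⁻ x, ENNReal.ofReal (∫ ω, zeroBiasKernel x (W ω) ∂μ)
      = ∫⁻ ω, ENNReal.ofReal (W ω ^ 2) ∂μ := by
  simp_rw [ofReal_integral_zeroBiasKernel hW]
  rw [lintegral_lintegral_swap (aemeasurable_zeroBiasKernel_prod hW.aemeasurable).ennreal_ofReal]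
  simp_rw [lintegral_zeroBiasKernel]

lemma aestronglyMeasurable_integral_zeroBiasKernel (hW : AEMeasurable W μ) :
    AEStronglyMeasurable (fun x => ∫ ω, zeroBiasKernel x (W ω) ∂μ) :=
  (aemeasurable_zeroBiasKernel_prod hW).aestronglyMeasurable.integral_prod_right'

lemma integrable_integral_zeroBiasKernel (hW : Integrable W μ)
    (hW2 : Integrable (fun ω => W ω ^ 2) μ) :
    Integrable fun x => ∫ ω, zeroBiasKernel x (W ω) ∂μ := by
  have h0 : 0 ≤ᵐ[volume] fun x => ∫ ω, zeroBiasKernel x (W ω) ∂μ :=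
    ae_of_all _ fun x => integral_nonneg fun ω => zeroBiasKernel_nonneg x (W ω)
  refine ⟨aestronglyMeasurable_integral_zeroBiasKernel hW.aemeasurable, ?_⟩
  rw [hasFiniteIntegral_iff_ofReal h0, lintegral_ofReal_integral_zeroBiasKernel hW]
  exact hW2.lintegral_lt_top

lemma integral_integral_zeroBiasKernel (hW : Integrable W μ) :
    ∫ x, ∫ ω, zeroBiasKernel x (W ω) ∂μ = ∫ ω, W ω ^ 2 ∂μ := by
  rw [integral_eq_lintegral_of_nonneg_ae
      (ae_of_all _ fun x => integral_nonneg fun ω => zeroBiasKernel_nonneg x (W ω))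
      (aestronglyMeasurable_integral_zeroBiasKernel hW.aemeasurable),
    lintegral_ofReal_integral_zeroBiasKernel hW,
    integral_eq_lintegral_of_nonneg_ae (ae_of_all _ fun ω => sq_nonneg (W ω))
      (hW.aestronglyMeasurable.pow 2)]

lemma integrable_mul_zeroBiasKernel_prod (hW : Integrable W μ) {g : ℝ → ℝ}
    (hg : AEStronglyMeasurable g) (h : Integrable fun x => g x * ∫ ω, zeroBiasKernel x (W ω) ∂μ) :
    Integrable (fun q : ℝ × Ω => g q.1 * zeroBiasKernel q.1 (W q.2)) (volume.prod μ) := by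
  have hK := aemeasurable_zeroBiasKernel_prod hW.aemeasurable
  have hsection : ∀ x, ∫⁻ ω, ‖g x * zeroBiasKernel x (W ω)‖ₑ ∂μ
      = ‖g x * ∫ ω, zeroBiasKernel x (W ω) ∂μ‖ₑ := fun x => by
    simp_rw [enorm_mul, Real.enorm_of_nonneg (zeroBiasKernel_nonneg _ _),
      Real.enorm_of_nonneg (integral_nonneg fun ω => zeroBiasKernel_nonneg x (W ω)),
      ofReal_integral_zeroBiasKernel hW]
    exact lintegral_const_mul'' _
      (measurable_zeroBiasKernel.of_uncurry_left.comp_aemeasurable hW.aemeasurable).ennreal_ofReal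
  have hF : AEStronglyMeasurable (fun q : ℝ × Ω => g q.1 * zeroBiasKernel q.1 (W q.2))
      (volume.prod μ) := hg.comp_fst.mul hK.aestronglyMeasurable
  refine ⟨hF, ?_⟩
  rw [hasFiniteIntegral_iff_enorm, lintegral_prod _ hF.enorm]
  simp_rw [hsection]
  exact hasFiniteIntegral_iff_enorm.mp h.hasFiniteIntegral

lemma integral_deriv_mul_integral_zeroBiasKernel (hW : Integrable W μ) (hmean : ∫ ω, W ω ∂μ = 0)
    {f f' : ℝ → ℝ} (hf : ∀ x, HasDerivAt f (f' x) x)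
    (hWf : Integrable (fun ω => W ω * f (W ω)) μ)
    (h : Integrable fun x => f' x * ∫ ω, zeroBiasKernel x (W ω) ∂μ) :
    ∫ x, f' x * ∫ ω, zeroBiasKernel x (W ω) ∂μ = ∫ ω, W ω * f (W ω) ∂μ := by
  have hf' : Measurable f' := funext (fun x => (hf x).deriv) ▸ measurable_deriv f
  have hF := integrable_mul_zeroBiasKernel_prod hW hf'.aestronglyMeasurable h
  have hsection : ∀ᵐ ω ∂μ, ∫ x, f' x * zeroBiasKernel x (W ω) = W ω * f (W ω) - f 0 * W ω := by
    filter_upwards [hF.prod_left_ae] with ω hω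
    rw [integral_mul_zeroBiasKernel, intervalIntegral.integral_eq_sub_of_hasDerivAt
      (fun x _ => hf x) (intervalIntegrable_of_integrable_mul_zeroBiasKernel hω)]
    ring
  calc ∫ x, f' x * ∫ ω, zeroBiasKernel x (W ω) ∂μ
      = ∫ x, ∫ ω, f' x * zeroBiasKernel x (W ω) ∂μ := by simp_rw [integral_const_mul]
    _ = ∫ ω, (∫ x, f' x * zeroBiasKernel x (W ω)) ∂μ := integral_integral_swap hF
    _ = ∫ ω, (W ω * f (W ω) - f 0 * W ω) ∂μ := integral_congr_ae hsection
    _ = ∫ ω, W ω * f (W ω) ∂μ := by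
      rw [integral_sub hWf (hW.const_mul _), integral_const_mul, hmean, mul_zero, sub_zero]

end

section

variable {α : Type*} [MeasurableSpace α] {μ : Measure α} {p : α → ℝ}

lemma isProbabilityMeasure_withDensity_ofReal (hp : 0 ≤ᵐ[μ] p) (hint : Integrable p μ)
    (h1 : ∫ x, p x ∂μ = 1) : IsProbabilityMeasure (μ.withDensity fun x => ENNReal.ofReal (p x)) :=
  ⟨by rw [withDensity_apply _ MeasurableSet.univ, Measure.restrict_univ,
    ← ofReal_integral_eq_lintegral_ofReal hint hp, h1, ENNReal.ofReal_one]⟩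

lemma integrable_withDensity_ofReal_iff (hpm : AEMeasurable p μ) (hp : 0 ≤ᵐ[μ] p) {g : α → ℝ} :
    Integrable g (μ.withDensity fun x => ENNReal.ofReal (p x))
      ↔ Integrable (fun x => p x * g x) μ := by
  rw [integrable_withDensity_iff_integrable_smul₀' hpm.ennreal_ofReal
    (ae_of_all _ fun _ => ENNReal.ofReal_lt_top)]
  exact integrable_congr (hp.mono fun x hx => by simp [ENNReal.toReal_ofReal hx])

lemma integral_withDensity_ofReal (hpm : AEMeasurable p μ) (hp : 0 ≤ᵐ[μ] p) (g : α → ℝ) :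
    ∫ x, g x ∂μ.withDensity (fun x => ENNReal.ofReal (p x)) = ∫ x, p x * g x ∂μ := by
  rw [integral_withDensity_eq_integral_toReal_smul₀ hpm.ennreal_ofReal
    (ae_of_all _ fun _ => ENNReal.ofReal_lt_top)]
  exact integral_congr_ae (hp.mono fun x hx => by simp [ENNReal.toReal_ofReal hx])

end

theorem zero_bias_distribution {Ω : Type*} [MeasurableSpace Ω]
    (μ : Measure Ω) [IsProbabilityMeasure μ]
    (W : Ω → ℝ) (v : ℝ) (hv : 0 < v)
    (hW : Integrable W μ) (hmean : ∫ ω, W ω ∂μ = 0)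
    (hW2 : Integrable (fun ω => W ω ^ 2) μ) (hvar : ∫ ω, W ω ^ 2 ∂μ = v)
    (p : ℝ → ℝ) (hp : ∀ x : ℝ, p x = (∫ ω, Set.indicator {ω' | x < W ω'} W ω ∂μ) / v)
    (μstar : Measure ℝ)
    (hμstar : μstar = volume.withDensity fun x => ENNReal.ofReal (p x)) :
    (∀ x : ℝ, 0 ≤ p x) ∧ (∫ x : ℝ, p x = 1) ∧ IsProbabilityMeasure μstar ∧
      ∀ f f' : ℝ → ℝ, (∀ x : ℝ, HasDerivAt f (f' x) x) →
        Integrable (fun ω => W ω * f (W ω)) μ → Integrable f' μstar →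
        ∫ ω, W ω * f (W ω) ∂μ = v * ∫ x, f' x ∂μstar := by
  set T : ℝ → ℝ := fun x => ∫ ω, zeroBiasKernel x (W ω) ∂μ with hTdef
  have hpT : p = fun x => T x / v :=
    funext fun x => by rw [hp, integral_indicator_lt_eq_integral_zeroBiasKernel hW hmean]
  have hT_nonneg : ∀ x, 0 ≤ T x := fun x => integral_nonneg fun ω => zeroBiasKernel_nonneg x (W ω)
  have hT_int : Integrable T := integrable_integral_zeroBiasKernel hW hW2
  have hp_nonneg : ∀ x, 0 ≤ p x := fun x => hpT ▸ div_nonneg (hT_nonneg x) hv.le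
  have hpm : AEMeasurable p := hpT ▸ (hT_int.aemeasurable.div_const v)
  have hp_one : ∫ x, p x = 1 := by
    rw [hpT, integral_div, integral_integral_zeroBiasKernel hW, hvar, div_self hv.ne']
  refine ⟨hp_nonneg, hp_one, hμstar ▸ isProbabilityMeasure_withDensity_ofReal
    (ae_of_all _ hp_nonneg) (hpT ▸ hT_int.div_const v) hp_one, fun f f' hf hWf hf' => ?_⟩
  subst hμstar
  rw [integrable_withDensity_ofReal_iff hpm (ae_of_all _ hp_nonneg)] at hf'
  have hf'T : Integrable fun x => f' x * T x :=
    (hf'.mul_const v).congr (ae_of_all _ fun x => by simp only [hpT]; field_simp)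
  rw [integral_withDensity_ofReal hpm (ae_of_all _ hp_nonneg), ← integral_const_mul,
    ← integral_deriv_mul_integral_zeroBiasKernel hW hmean hf hWf hf'T]
  refine integral_congr_ae (ae_of_all _ fun x => ?_)
  simp only [hpT, hTdef]
  field_simp
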